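/- arXiv:1812.11934 — 5 statements merged into one kernel-verified Lean document; each statement's English description precedes it below -/
import Mathlib

section
/- Let q be a monic polynomial of degree d over ℂ with no roots of modulus R, where R > 0. Then (1/2π) ∫₀^{2π} log|q(R e^{iθ})| dθ = Σ_{|rᵢ| > R} log|rᵢ| + Σ_{|rᵢ| < R} log R, where the sums run over the roots rᵢ of q counted with multiplicity. -/
/-!
Rescaling `z ↦ R z` turns the average of `log ‖q‖` over the circle `‖z‖ = R` into the logarithmic
Mahler measure of `q(R X)`, whose leading coefficient is `R ^ d` and whose roots are the `r / R`.
The root formula for the Mahler measure then contributes `log R + log⁺ (‖r‖ / R)` for each root,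
which is `log ‖r‖` outside the circle and `log R` inside it.
-/

open Real Polynomial

theorem log_add_posLog_inv_mul_eq_ite {R x : ℝ} (hR : 0 < R) (hx : 0 ≤ x) :
    log R + log⁺ (R⁻¹ * x) = if R < x then log x else log R := by
  split_ifs with h
  · have hx' : 0 < x := hR.trans h
    rw [posLog_eq_log (by rw [abs_of_pos (by positivity)]; exact (one_le_inv_mul₀ hR).2 h.le),
      log_mul (inv_ne_zero hR.ne') hx'.ne', log_inv]
    ring
  · rw [add_eq_left, posLog_eq_zero_iff, abs_of_nonneg (by positivity)]
    exact inv_mul_le_one_of_le₀ (not_lt.1 h) hR.le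

namespace Polynomial

theorem roots_comp_C_mul_X {K : Type*} [Field K] {a : K} (ha : a ≠ 0) (p : K[X]) :
    (p.comp (C a * X)).roots = p.roots.map (a⁻¹ * ·) := by
  simpa using p.roots_comp_C_mul_X_add_C a 0 ha.isUnit

theorem leadingCoeff_comp_C_mul_X {R : Type*} [CommRing R] [NoZeroDivisors R] {a : R} (ha : a ≠ 0)
    (p : R[X]) : (p.comp (C a * X)).leadingCoeff = p.leadingCoeff * a ^ p.natDegree := by
  rw [leadingCoeff_comp (by simp [natDegree_C_mul_X a ha]), leadingCoeff_C_mul_X]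

theorem logMahlerMeasure_comp_C_mul_X (R : ℝ) (p : ℂ[X]) :
    (p.comp (C (R : ℂ) * X)).logMahlerMeasure = circleAverage (fun z ↦ log ‖p.eval z‖) 0 R := by
  simp [logMahlerMeasure_def, circleAverage_eq_circleAverage_zero_one (c := 0)]

theorem circleAverage_log_norm_eval {R : ℝ} (hR : 0 < R) (p : ℂ[X]) :
    circleAverage (fun z ↦ log ‖p.eval z‖) 0 R = log ‖p.leadingCoeff‖ +
      (p.roots.map fun r ↦ if R < ‖r‖ then log ‖r‖ else log R).sum := by
  rcases eq_or_ne p 0 with rfl | hp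
  · simp [circleAverage_def]
  have hR' : (R : ℂ) ≠ 0 := Complex.ofReal_ne_zero.2 hR.ne'
  rw [← logMahlerMeasure_comp_C_mul_X, logMahlerMeasure_eq_log_leadingCoeff_add_sum_log_roots,
    leadingCoeff_comp_C_mul_X hR', roots_comp_C_mul_X hR', norm_mul, norm_pow, Complex.norm_real,
    Real.norm_of_nonneg hR.le, log_mul (by simpa using hp) (by positivity), log_pow,
    ← IsAlgClosed.card_roots_eq_natDegree, add_assoc, ← nsmul_eq_mul, ← Multiset.sum_replicate,
    ← Multiset.map_const', Multiset.map_map, ← Multiset.sum_map_add]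
  refine congrArg _ (congrArg _ (Multiset.map_congr rfl fun r _ ↦ ?_))
  rw [Function.comp_apply, norm_mul, norm_inv, Complex.norm_real, Real.norm_of_nonneg hR.le,
    log_add_posLog_inv_mul_eq_ite hR (norm_nonneg r)]

end Polynomial

theorem mahler_circle_integral_general (q : Polynomial ℂ)
    (hq : q.Monic) (R : ℝ) (hR : 0 < R) :
    (1 / (2 * Real.pi)) * ∫ θ in (0:ℝ)..(2 * Real.pi),
        Real.log (‖q.eval ((R : ℂ) * Complex.exp (θ * Complex.I))‖)
      = (q.roots.map (fun r => if R < ‖r‖ then Real.log (‖r‖)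
          else Real.log R)).sum := by
  have h := q.circleAverage_log_norm_eval hR
  rw [hq.leadingCoeff, norm_one, log_one, zero_add, circleAverage_def] at h
  simpa [circleMap] using h

theorem mahler_circle_integral (q : Polynomial ℂ) (d : ℕ) (hd : q.natDegree = d)
    (hq : q.Monic) (R : ℝ) (hR : 0 < R)
    (hroots : ∀ z ∈ q.roots, ‖z‖ ≠ R) :
    (1 / (2 * Real.pi)) * ∫ θ in (0:ℝ)..(2 * Real.pi),
        Real.log (‖q.eval ((R : ℂ) * Complex.exp (θ * Complex.I))‖)
      = (q.roots.map (fun r => if R < ‖r‖ then Real.log (‖r‖)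
          else Real.log R)).sum :=
  mahler_circle_integral_general q hq R hR
end

section
/- Let α, β > 0 and c ∈ ℝ with c ∉ (0,1). For any real t, both roots of the quadratic equation in z given by (α/z − β/(1−z))(z − c) − t = 0, i.e. of the quadratic cleared of denominators (α(1−z) − βz)(z−c) − t z(1−z) = 0, are real. -/
theorem quadratic_roots_real (α β c t : ℝ) (hα : 0 < α) (hβ : 0 < β)
    (hc : c ≤ 0 ∨ 1 ≤ c) :
    (t - α - c * α - c * β) ^ 2 - 4 * c * α * (-t + α + β) ≥ 0 ∧
    ∀ z : ℂ, ((α : ℂ) * (1 - z) - (β : ℂ) * z) * (z - (c : ℂ))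
        - (t : ℂ) * z * (1 - z) = 0 → z.im = 0 := by
  have hcc : c * (c - 1) ≥ 0 := by rcases hc with h | h <;> nlinarith
  have hdisc : (t - α - c * α - c * β) ^ 2 - 4 * c * α * (-t + α + β) ≥ 0 := by
    nlinarith [sq_nonneg (t - (α - α * c + β * c)), mul_nonneg (mul_nonneg hα.le hβ.le) hcc]
  refine ⟨hdisc, fun z hz => ?_⟩
  set x := z.re
  set y := z.im
  have hre := congrArg Complex.re hz
  have him := congrArg Complex.im hz
  simp [Complex.mul_re, Complex.mul_im] at hre him
  by_contra hy
  rcases ne_or_eq (t - α - β) 0 with hA | hA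
  · have hB : 2 * (t - α - β) * x + (α + (α + β) * c - t) = 0 := by
      have h0 : y * (2 * (t - α - β) * x + (α + (α + β) * c - t)) = 0 := by
        linear_combination him
      rcases mul_eq_zero.mp h0 with h | h
      · exact absurd h hy
      · exact h
    have key : 4 * (t - α - β) ^ 2 * y ^ 2 +
        ((t - α - c * α - c * β) ^ 2 - 4 * c * α * (-t + α + β)) = 0 := by
      linear_combination (-4 * (t - α - β)) * hre +
        (2 * (t - α - β) * x + (α + (α + β) * c - t)) * hB
    have hA2 : 0 < (t - α - β) ^ 2 :=
      lt_of_le_of_ne (sq_nonneg _) (Ne.symm (pow_ne_zero 2 hA))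
    have hy2 : 0 < y ^ 2 := by positivity
    nlinarith [mul_pos hA2 hy2]
  · have hB : (α + (α + β) * c - t) = 0 := by
      have h0 : y * (2 * (t - α - β) * x + (α + (α + β) * c - t)) = 0 := by
        linear_combination him
      rw [hA] at h0
      simpa [hy] using h0
    have hc0 : α * c = 0 := by
      linear_combination -hre + (x ^ 2 - y ^ 2) * hA + x * hB
    have hceq : c = 0 := (mul_eq_zero.mp hc0).resolve_left hα.ne'
    rw [hceq] at hB
    nlinarith [hA, hB]
end

section
/- Any circle centered at a point c ∈ (−∞,0] ∪ [1,∞) intersects a Cassini oval {w ∈ ℂ : |w|^a |1−w|^b = K} (with a, b > 0, K > 0) in at most two points. -/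
/-!
On a circle `‖w - c‖ = R` with real centre, `‖w‖²` and `‖1 - w‖²` are affine functions of `Re w`
with slopes `2c` and `2(c - 1)`. For `c ∉ (0, 1)` these slopes have the same sign and one of them
is nonzero, so `‖w‖ ^ a * ‖1 - w‖ ^ b` is strictly monotone in `Re w` along the circle. Hence all
points of the circle on one Cassini oval share their real part, and a circle centred on the real
axis meets a vertical line only in a point and its conjugate.
-/

open Complex ComplexConjugate

noncomputable def cassini (a b : ℝ) (w : ℂ) : ℝ := ‖w‖ ^ a * ‖1 - w‖ ^ b

lemma cassini_one_sub (a b : ℝ) (w : ℂ) : cassini a b (1 - w) = cassini b a w := by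
  rw [cassini, cassini, sub_sub_cancel, mul_comm]

lemma ne_zero_of_cassini_ne_zero {a b : ℝ} (ha : 0 < a) {w : ℂ} (h : cassini a b w ≠ 0) :
    w ≠ 0 := by
  rintro rfl
  simp [cassini, Real.zero_rpow ha.ne'] at h

lemma sq_norm_eq_sq_norm_sub_ofReal (w : ℂ) (c : ℝ) :
    ‖w‖ ^ 2 = ‖w - c‖ ^ 2 + 2 * c * w.re - c ^ 2 := by
  simp only [Complex.sq_norm, normSq_apply, sub_re, sub_im, ofReal_re, ofReal_im]
  ring

lemma sq_norm_one_sub_eq_sq_norm_sub_ofReal (w : ℂ) (c : ℝ) :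
    ‖1 - w‖ ^ 2 = ‖w - c‖ ^ 2 + 2 * (c - 1) * w.re + 1 - c ^ 2 := by
  simp only [Complex.sq_norm, normSq_apply, sub_re, sub_im, one_re, one_im, ofReal_re, ofReal_im]
  ring

lemma cassini_lt_of_re_lt {a b c : ℝ} (ha : 0 ≤ a) (hb : 0 < b) (hc : c ≤ 0) {w₁ w₂ : ℂ}
    (hw : ‖w₁ - c‖ = ‖w₂ - c‖) (h₀ : w₁ ≠ 0) (hre : w₁.re < w₂.re) :
    cassini a b w₂ < cassini a b w₁ := by
  have hnorm : ‖w₂‖ ≤ ‖w₁‖ := by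
    refine (pow_le_pow_iff_left₀ (norm_nonneg _) (norm_nonneg _) two_ne_zero).mp ?_
    rw [sq_norm_eq_sq_norm_sub_ofReal w₁ c, sq_norm_eq_sq_norm_sub_ofReal w₂ c, hw]
    nlinarith
  have hnorm_one_sub : ‖1 - w₂‖ < ‖1 - w₁‖ := by
    refine (pow_lt_pow_iff_left₀ (norm_nonneg _) (norm_nonneg _) two_ne_zero).mp ?_
    rw [sq_norm_one_sub_eq_sq_norm_sub_ofReal w₁ c, sq_norm_one_sub_eq_sq_norm_sub_ofReal w₂ c, hw]
    nlinarith
  have : 0 < ‖w₁‖ := norm_pos_iff.mpr h₀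
  unfold cassini
  calc ‖w₂‖ ^ a * ‖1 - w₂‖ ^ b ≤ ‖w₁‖ ^ a * ‖1 - w₂‖ ^ b := by gcongr
    _ < ‖w₁‖ ^ a * ‖1 - w₁‖ ^ b := by gcongr

lemma re_le_of_cassini_eq {a b c : ℝ} (ha : 0 < a) (hb : 0 < b) (hc : c ≤ 0 ∨ 1 ≤ c)
    {w₁ w₂ : ℂ} (hw : ‖w₁ - c‖ = ‖w₂ - c‖) (heq : cassini a b w₁ = cassini a b w₂)
    (h₀ : cassini a b w₁ ≠ 0) : w₂.re ≤ w₁.re := by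
  by_contra! hre
  rcases hc with hc | hc
  · exact (cassini_lt_of_re_lt ha.le hb hc hw (ne_zero_of_cassini_ne_zero ha h₀) hre).ne heq.symm
  · -- `w ↦ 1 - w` maps the circle centred at `c` to the one centred at `1 - c ≤ 0`
    have hw' : ‖(1 - w₂) - ((1 - c : ℝ) : ℂ)‖ = ‖(1 - w₁) - ((1 - c : ℝ) : ℂ)‖ := by
      push_cast
      rw [sub_sub_sub_cancel_left, sub_sub_sub_cancel_left, norm_sub_rev, ← hw, norm_sub_rev]
    have h₀' : 1 - w₂ ≠ 0 := by
      refine ne_zero_of_cassini_ne_zero (b := a) hb ?_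
      rwa [cassini_one_sub, ← heq]
    have hre' : (1 - w₂).re < (1 - w₁).re := by simpa using hre
    have := cassini_lt_of_re_lt hb.le ha (by linarith) hw' h₀' hre'
    rw [cassini_one_sub, cassini_one_sub] at this
    exact this.ne' heq.symm

lemma re_eq_of_cassini_eq {a b c : ℝ} (ha : 0 < a) (hb : 0 < b) (hc : c ≤ 0 ∨ 1 ≤ c)
    {w₁ w₂ : ℂ} (hw : ‖w₁ - c‖ = ‖w₂ - c‖) (heq : cassini a b w₁ = cassini a b w₂)
    (h₀ : cassini a b w₁ ≠ 0) : w₁.re = w₂.re :=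
  le_antisymm (re_le_of_cassini_eq ha hb hc hw.symm heq.symm (heq ▸ h₀))
    (re_le_of_cassini_eq ha hb hc hw heq h₀)

lemma eq_or_eq_conj_of_re_eq {c : ℝ} {w₁ w₂ : ℂ} (hw : ‖w₁ - c‖ = ‖w₂ - c‖)
    (hre : w₁.re = w₂.re) : w₁ = w₂ ∨ w₁ = conj w₂ := by
  have him : w₁.im ^ 2 = w₂.im ^ 2 := by
    have := congrArg (· ^ 2) hw
    simp only [Complex.sq_norm, normSq_apply, sub_re, sub_im, ofReal_re, ofReal_im, hre] at this
    linarith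
  rcases sq_eq_sq_iff_eq_or_eq_neg.mp him with h | h
  · exact Or.inl (Complex.ext hre h)
  · exact Or.inr (Complex.ext (by simpa using hre) (by simpa using h))

theorem circle_meets_cassini_in_at_most_two_points_general
    (a b K R : ℝ) (ha : 0 < a) (hb : 0 < b) (hK : 0 < K)
    (c : ℝ) (hc : c ≤ 0 ∨ 1 ≤ c)
    (w₁ w₂ w₃ : ℂ)
    (h₁ : ‖w₁‖ ^ a * ‖1 - w₁‖ ^ b = K ∧ ‖w₁ - (c : ℂ)‖ = R)
    (h₂ : ‖w₂‖ ^ a * ‖1 - w₂‖ ^ b = K ∧ ‖w₂ - (c : ℂ)‖ = R)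
    (h₃ : ‖w₃‖ ^ a * ‖1 - w₃‖ ^ b = K ∧ ‖w₃ - (c : ℂ)‖ = R) :
    w₁ = w₂ ∨ w₁ = w₃ ∨ w₂ = w₃ := by
  have h₀ : cassini a b w₁ ≠ 0 := h₁.1.trans_ne hK.ne'
  have hw₁₂ := h₁.2.trans h₂.2.symm
  have hw₁₃ := h₁.2.trans h₃.2.symm
  have hre₁₂ := re_eq_of_cassini_eq ha hb hc hw₁₂ (h₁.1.trans h₂.1.symm) h₀
  have hre₁₃ := re_eq_of_cassini_eq ha hb hc hw₁₃ (h₁.1.trans h₃.1.symm) h₀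
  rcases eq_or_eq_conj_of_re_eq hw₁₂ hre₁₂ with h₁₂ | h₁₂
  · exact Or.inl h₁₂
  rcases eq_or_eq_conj_of_re_eq hw₁₃ hre₁₃ with h₁₃ | h₁₃
  · exact Or.inr (Or.inl h₁₃)
  exact Or.inr (Or.inr (star_injective (h₁₂.symm.trans h₁₃)))

theorem circle_meets_cassini_in_at_most_two_points
    (a b K R : ℝ) (ha : 0 < a) (hb : 0 < b) (hK : 0 < K) (hR : 0 < R)
    (c : ℝ) (hc : c ≤ 0 ∨ 1 ≤ c)
    (w₁ w₂ w₃ : ℂ)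
    (h₁ : ‖w₁‖ ^ a * ‖1 - w₁‖ ^ b = K ∧ ‖w₁ - (c : ℂ)‖ = R)
    (h₂ : ‖w₂‖ ^ a * ‖1 - w₂‖ ^ b = K ∧ ‖w₂ - (c : ℂ)‖ = R)
    (h₃ : ‖w₃‖ ^ a * ‖1 - w₃‖ ^ b = K ∧ ‖w₃ - (c : ℂ)‖ = R) :
    w₁ = w₂ ∨ w₁ = w₃ ∨ w₂ = w₃ :=
  circle_meets_cassini_in_at_most_two_points_general a b K R ha hb hK c hc w₁ w₂ w₃ h₁ h₂ h₃
end

section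
/- For 0 ≤ r < 1 and 0 ≤ θ ≤ π, ∫_θ^{2π−θ} log|1 − r e^{it}| dt = 2 Im Li₂(r e^{iθ}). -/
/-!
Expanding `-log (1 - w) = ∑ wⁿ⁺¹/(n+1)` at `w = r e^{it}` gives the Fourier series
`log |1 - r e^{it}| = -∑ rⁿ⁺¹ cos((n+1)t)/(n+1)`, and at `w = tz` it gives, after termwise
integration over `t ∈ (0, 1]`, `Li₂ z = ∑ zⁿ⁺¹/(n+1)²`. Both series are dominated by a
geometric series, so they may be integrated term by term. As `sin((n+1)(2π - θ)) = -sin((n+1)θ)`,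
the `n`-th Fourier term integrates over `[θ, 2π - θ]` to `2 rⁿ⁺¹ sin((n+1)θ)/(n+1)²`, which is
twice the imaginary part of the `n`-th term of `Li₂ (r e^{iθ})`.
-/

open Real Complex

/-- The principal dilogarithm `Li₂(z) = -∫₀¹ log(1 - t z)/t dt`. -/
noncomputable def Li2 (z : ℂ) : ℂ :=
  -∫ t in (0:ℝ)..1, Complex.log (1 - (t : ℂ) * z) / (t : ℂ)

open MeasureTheory
open scoped Interval

theorem hasSum_intervalIntegral_of_norm_le_summable {ι E : Type*} [Countable ι]
    [NormedAddCommGroup E] [NormedSpace ℝ E] {F : ι → ℝ → E} {f : ℝ → E} {M : ι → ℝ} {a b : ℝ}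
    (hF : ∀ n, AEStronglyMeasurable (F n) (volume.restrict (Ι a b))) (hM : Summable M)
    (hFM : ∀ n, ∀ t ∈ Ι a b, ‖F n t‖ ≤ M n) (hf : ∀ t ∈ Ι a b, HasSum (fun n => F n t) (f t)) :
    HasSum (fun n => ∫ t in a..b, F n t) (∫ t in a..b, f t) :=
  intervalIntegral.hasSum_integral_of_dominated_convergence (fun n _ => M n) hF
    (fun n => .of_forall (hFM n)) (.of_forall fun _ _ => hM) intervalIntegrable_const
    (.of_forall hf)

theorem re_ofReal_mul_exp_mul_I_pow (r t : ℝ) (n : ℕ) :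
    (((r : ℂ) * exp (t * I)) ^ n).re = r ^ n * Real.cos (n * t) := by
  rw [mul_pow, ← Complex.exp_nat_mul, ← ofReal_pow,
    show (n : ℂ) * (t * I) = ((n * t : ℝ) : ℂ) * I by push_cast; ring,
    re_ofReal_mul, exp_ofReal_mul_I_re]

theorem im_ofReal_mul_exp_mul_I_pow (r t : ℝ) (n : ℕ) :
    (((r : ℂ) * exp (t * I)) ^ n).im = r ^ n * Real.sin (n * t) := by
  rw [mul_pow, ← Complex.exp_nat_mul, ← ofReal_pow,
    show (n : ℂ) * (t * I) = ((n * t : ℝ) : ℂ) * I by push_cast; ring,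
    im_ofReal_mul, exp_ofReal_mul_I_im]

theorem norm_ofReal_mul_exp_mul_I (r t : ℝ) : ‖(r : ℂ) * exp (t * I)‖ = |r| := by
  rw [norm_mul, norm_exp_ofReal_mul_I, norm_real, Real.norm_eq_abs, mul_one]

theorem hasSum_log_norm_one_sub_ofReal_mul_exp {r : ℝ} (hr : |r| < 1) (t : ℝ) :
    HasSum (fun n : ℕ => -(r ^ (n + 1) / (n + 1)) * Real.cos ((n + 1) * t))
      (Real.log ‖1 - r * exp (t * I)‖) := by
  have h := hasSum_re (hasSum_taylorSeries_neg_log'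
    ((norm_ofReal_mul_exp_mul_I r t).trans_lt hr)).neg
  rw [neg_neg, log_re] at h
  convert h using 2 with n
  rw [neg_re, show (n : ℂ) + 1 = ((n + 1 : ℝ) : ℂ) by push_cast; ring, div_ofReal_re,
    re_ofReal_mul_exp_mul_I_pow]
  push_cast
  ring

theorem integral_cos_nat_mul_to_two_pi_sub (k : ℕ) (hk : k ≠ 0) (θ : ℝ) :
    ∫ t in θ..2 * π - θ, Real.cos (k * t) = -2 * Real.sin (k * θ) / k := by
  have hk' : (k : ℝ) ≠ 0 := Nat.cast_ne_zero.2 hk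
  rw [intervalIntegral.integral_comp_mul_left (fun t => Real.cos t) hk', integral_cos,
    mul_sub, Real.sin_nat_mul_two_pi_sub, smul_eq_mul]
  field_simp
  ring

theorem hasSum_Li2 {z : ℂ} (hz : ‖z‖ < 1) :
    HasSum (fun n : ℕ => z ^ (n + 1) / (n + 1) ^ 2) (Li2 z) := by
  have hterm : ∀ t ∈ Ι (0 : ℝ) 1, HasSum (fun n : ℕ => (t : ℂ) ^ n * (z ^ (n + 1) / (n + 1)))
      (-(log (1 - t * z) / t)) := by
    intro t ht
    rw [Set.uIoc_of_le zero_le_one] at ht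
    have ht0 : (t : ℂ) ≠ 0 := ofReal_ne_zero.2 ht.1.ne'
    have htz : ‖(t : ℂ) * z‖ < 1 := by
      rw [norm_mul, norm_real, Real.norm_of_nonneg ht.1.le]
      exact (mul_le_of_le_one_left (norm_nonneg z) ht.2).trans_lt hz
    rw [← neg_div]
    refine ((hasSum_taylorSeries_neg_log' htz).div_const (t : ℂ)).congr_fun fun n => ?_
    field_simp
    ring
  have hbound : ∀ n : ℕ, ∀ t ∈ Ι (0 : ℝ) 1,
      ‖(t : ℂ) ^ n * (z ^ (n + 1) / (n + 1))‖ ≤ ‖z‖ ^ (n + 1) := by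
    intro n t ht
    rw [Set.uIoc_of_le zero_le_one] at ht
    rw [norm_mul, norm_div, norm_pow, norm_pow, norm_real, Real.norm_of_nonneg ht.1.le,
      ← Nat.cast_add_one, Complex.norm_natCast]
    calc t ^ n * (‖z‖ ^ (n + 1) / (n + 1 : ℕ)) ≤ 1 * (‖z‖ ^ (n + 1) / 1) := by
          gcongr
          · exact pow_le_one₀ ht.1.le ht.2
          · exact_mod_cast n.succ_pos
      _ = ‖z‖ ^ (n + 1) := by ring
  have hintegral (n : ℕ) :
      ∫ t in (0 : ℝ)..1, (t : ℂ) ^ n * (z ^ (n + 1) / (n + 1)) = z ^ (n + 1) / (n + 1) ^ 2 := by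
    simp only [intervalIntegral.integral_mul_const, ← ofReal_pow, intervalIntegral.integral_ofReal,
      integral_pow]
    norm_num
    field_simp
  rw [Li2, ← intervalIntegral.integral_neg]
  refine (hasSum_intervalIntegral_of_norm_le_summable (fun n => by fun_prop)
    (summable_geometric_of_lt_one (norm_nonneg z) hz |>.mul_left ‖z‖ |>.congr fun n => by ring)
    hbound hterm).congr_fun fun n => (hintegral n).symm

theorem hasSum_integral_log_norm_one_sub_ofReal_mul_exp {r : ℝ} (hr : |r| < 1) (θ : ℝ) :
    HasSum (fun n : ℕ => 2 * (r ^ (n + 1) * Real.sin ((n + 1) * θ) / (n + 1) ^ 2))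
      (∫ t in θ..2 * π - θ, Real.log ‖1 - r * exp (t * I)‖) := by
  have hbound (n : ℕ) (t : ℝ) : ‖-(r ^ (n + 1) / (n + 1)) * Real.cos ((n + 1) * t)‖ ≤
      |r| ^ (n + 1) := by
    have hn : (1 : ℝ) ≤ n + 1 := by linarith [n.cast_nonneg (α := ℝ)]
    rw [norm_mul, norm_neg, norm_div, norm_pow, Real.norm_eq_abs,
      Real.norm_of_nonneg (by positivity)]
    calc |r| ^ (n + 1) / (n + 1) * ‖Real.cos ((n + 1) * t)‖ ≤ |r| ^ (n + 1) / 1 * 1 := by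
          gcongr
          exact Real.abs_cos_le_one _
      _ = |r| ^ (n + 1) := by ring
  have hintegral (n : ℕ) : ∫ t in θ..2 * π - θ, -(r ^ (n + 1) / (n + 1)) * Real.cos ((n + 1) * t)
      = 2 * (r ^ (n + 1) * Real.sin ((n + 1) * θ) / (n + 1) ^ 2) := by
    have hcos := integral_cos_nat_mul_to_two_pi_sub (n + 1) n.succ_ne_zero θ
    push_cast at hcos
    rw [intervalIntegral.integral_const_mul, hcos]
    field_simp
  refine (hasSum_intervalIntegral_of_norm_le_summable (fun n => by fun_prop)
    ((summable_geometric_of_lt_one (abs_nonneg r) hr).mul_left |r| |>.congr fun n => by ring)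
    (fun n t _ => hbound n t) (fun t _ => hasSum_log_norm_one_sub_ofReal_mul_exp hr t)).congr_fun
    fun n => (hintegral n).symm

theorem hasSum_im_Li2_ofReal_mul_exp {r : ℝ} (hr : |r| < 1) (θ : ℝ) :
    HasSum (fun n : ℕ => r ^ (n + 1) * Real.sin ((n + 1) * θ) / (n + 1) ^ 2)
      (Li2 (r * exp (θ * I))).im := by
  refine (hasSum_im (hasSum_Li2 ((norm_ofReal_mul_exp_mul_I r θ).trans_lt hr))).congr_fun
    fun n => ?_
  rw [show ((n : ℂ) + 1) ^ 2 = (((n + 1) ^ 2 : ℝ) : ℂ) by push_cast; ring, div_ofReal_im,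
    im_ofReal_mul_exp_mul_I_pow]
  push_cast
  rfl

theorem integral_log_abs_eq_dilog_general (r θ : ℝ) (hr0 : 0 ≤ r) (hr1 : r < 1) :
    ∫ t in θ..(2 * Real.pi - θ),
        Real.log ‖1 - (r : ℂ) * Complex.exp ((t : ℂ) * Complex.I)‖
      = 2 * (Li2 ((r : ℂ) * Complex.exp ((θ : ℂ) * Complex.I))).im := by
  have hr : |r| < 1 := abs_lt.2 ⟨by linarith, hr1⟩
  exact (hasSum_integral_log_norm_one_sub_ofReal_mul_exp hr θ).unique
    ((hasSum_im_Li2_ofReal_mul_exp hr θ).mul_left 2)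

theorem integral_log_abs_eq_dilog (r θ : ℝ) (hr0 : 0 ≤ r) (hr1 : r < 1)
    (hθ0 : 0 ≤ θ) (hθπ : θ ≤ Real.pi) :
    ∫ t in θ..(2 * Real.pi - θ),
        Real.log ‖1 - (r : ℂ) * Complex.exp ((t : ℂ) * Complex.I)‖
      = 2 * (Li2 ((r : ℂ) * Complex.exp ((θ : ℂ) * Complex.I))).im :=
  integral_log_abs_eq_dilog_general r θ hr0 hr1
end

section
/- Let 0 < r < 1, let u ∈ ℂ with Im u > 0, set ρ = |u|, w = (1 − ū)/(1−r²), z = (1 − r²/ū)/(1−r²), and A(ζ) = −ζ·arg(ζ) − (1−ζ)·arg(1−ζ). Then r² Im(w) + ρ² Im(z) = 0, and consequently the quantity r² A(w) − u ū A(z) is real. -/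
/-!
With `a = ū` one has `1 - w = a z` and `1 - z = r² w / a`, hence `(1 - w)(1 - z) = r² w z`.
Since `w` lies in the upper and `z` in the lower half plane (and `1 - w`, `1 - z` the other way
round), the arguments add without wrap-around, so `arg (1 - w) + arg (1 - z) = arg w + arg z`.
As `Im A(ζ) = Im ζ · (arg (1 - ζ) - arg ζ)` and `|u|² Im z = -r² Im w`, the imaginary part of
`r² A(w) - |u|² A(z)` is `r² Im w · ((arg (1 - w) + arg (1 - z)) - (arg w + arg z)) = 0`.
-/

open Real Complex

/-- `A(ζ) = −ζ·arg(ζ) − (1−ζ)·arg(1−ζ)`. -/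
noncomputable def Afun (ζ : ℂ) : ℂ :=
  -ζ * (Complex.arg ζ : ℂ) - (1 - ζ) * (Complex.arg (1 - ζ) : ℂ)

open ComplexConjugate

namespace Complex

theorem arg_mul_of_im_pos_of_im_neg {x y : ℂ} (hx : 0 < x.im) (hy : y.im < 0) :
    arg (x * y) = arg x + arg y := by
  have hx₀ : x ≠ 0 := fun h => by simp [h] at hx
  have hy₀ : y ≠ 0 := fun h => by simp [h] at hy
  refine arg_mul hx₀ hy₀ ⟨?_, ?_⟩
  · linarith [arg_nonneg_iff.mpr hx.le, neg_pi_lt_arg y]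
  · linarith [arg_le_pi x, arg_neg_iff.mpr hy]

theorem arg_one_sub_add_arg_one_sub {w z : ℂ} {c : ℝ} (hc : 0 < c) (hw : 0 < w.im)
    (hz : z.im < 0) (h : (1 - w) * (1 - z) = c * (w * z)) :
    arg (1 - w) + arg (1 - z) = arg w + arg z := by
  have h1z : 0 < (1 - z).im := by simpa using hz
  have h1w : (1 - w).im < 0 := by simpa using hw
  calc arg (1 - w) + arg (1 - z) = arg ((1 - z) * (1 - w)) := by
        rw [arg_mul_of_im_pos_of_im_neg h1z h1w, add_comm]
    _ = arg (c * (w * z)) := by rw [mul_comm, h]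
    _ = arg w + arg z := by rw [arg_real_mul _ hc, arg_mul_of_im_pos_of_im_neg hw hz]

end Complex

theorem im_Afun (ζ : ℂ) : (Afun ζ).im = ζ.im * (arg (1 - ζ) - arg ζ) := by
  simp only [Afun, neg_mul, sub_im, neg_im, mul_im, ofReal_im, mul_zero, ofReal_re, zero_add,
    sub_re, one_re, one_im, zero_sub, sub_neg_eq_add]
  ring

theorem im_one_sub_conj_div_ofReal (u : ℂ) (t : ℝ) :
    ((1 - conj u) / t).im = u.im / t := by
  simp [div_ofReal_im]

theorem sq_norm_mul_im_one_sub_div_conj (u : ℂ) (c t : ℝ) :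
    ‖u‖ ^ 2 * ((1 - c / conj u) / t).im = -(c * u.im) / t := by
  rcases eq_or_ne u 0 with rfl | hu
  · simp
  rw [div_ofReal_im, sub_im, one_im, div_im, ← normSq_eq_norm_sq]
  simp only [ofReal_im, conj_re, zero_mul, normSq_conj, zero_div, ofReal_re, conj_im, mul_neg,
    zero_sub, sub_neg_eq_add, zero_add]
  field_simp [normSq_pos.mpr hu |>.ne']

theorem one_sub_div_mul_one_sub_div {a c : ℂ} (ha : a ≠ 0) (hc : 1 - c ≠ 0) :
    (1 - (1 - a) / (1 - c)) * (1 - (1 - c / a) / (1 - c)) =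
      c * ((1 - a) / (1 - c) * ((1 - c / a) / (1 - c))) := by
  field_simp
  ring

theorem rsqA_real (r : ℝ) (hr0 : 0 < r) (hr1 : r < 1)
    (u : ℂ) (hu : 0 < u.im)
    (w z : ℂ)
    (hw : w = (1 - (starRingEnd ℂ) u) / (1 - (r : ℂ) ^ 2))
    (hz : z = (1 - (r : ℂ) ^ 2 / (starRingEnd ℂ) u) / (1 - (r : ℂ) ^ 2)) :
    r ^ 2 * w.im + ‖u‖ ^ 2 * z.im = 0 ∧
    ((r : ℂ) ^ 2 * Afun w - u * (starRingEnd ℂ) u * Afun z).im = 0 := by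
  have ht : 0 < 1 - r ^ 2 := by nlinarith
  have hcast : (1 : ℂ) - (r : ℂ) ^ 2 = ((1 - r ^ 2 : ℝ) : ℂ) := by push_cast; ring
  have hw_im : w.im = u.im / (1 - r ^ 2) := by
    rw [hw, hcast, im_one_sub_conj_div_ofReal]
  have hz_im : ‖u‖ ^ 2 * z.im = -(r ^ 2 * u.im) / (1 - r ^ 2) := by
    rw [hz, hcast, ← ofReal_pow, sq_norm_mul_im_one_sub_div_conj]
  have him : r ^ 2 * w.im + ‖u‖ ^ 2 * z.im = 0 := by
    rw [hw_im, hz_im]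
    ring
  have hw_pos : 0 < w.im := by rw [hw_im]; positivity
  have hz_neg : z.im < 0 := by
    have : ‖u‖ ^ 2 * z.im < 0 := by linarith [mul_pos (pow_pos hr0 2) hw_pos]
    exact neg_of_mul_neg_right this (sq_nonneg _)
  have hargs : arg (1 - w) + arg (1 - z) = arg w + arg z := by
    refine arg_one_sub_add_arg_one_sub (c := r ^ 2) (by positivity) hw_pos hz_neg ?_
    rw [hw, hz, ofReal_pow]
    have hu₀ : conj u ≠ 0 := by simpa using ne_of_apply_ne im hu.ne'
    exact one_sub_div_mul_one_sub_div hu₀ (by exact_mod_cast ht.ne')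
  refine ⟨him, ?_⟩
  rw [mul_conj, normSq_eq_norm_sq, sub_im, ← ofReal_pow, im_ofReal_mul,
    im_ofReal_mul, im_Afun, im_Afun]
  linear_combination r ^ 2 * w.im * hargs - (arg (1 - z) - arg z) * him
end
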